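/- arXiv:1702.01707 — 2 statements merged into one kernel-verified Lean document; each statement's English description precedes it below -/
import Mathlib

section
/- Let $B = (b_{pqr})_{p,q,r \in \{1,2\}}$ be a real $2\times 2\times 2$ array symmetric in its last two indices ($b_{pqr} = b_{prq}$), and let $\sigma_k = (\cos(\pi k/3), \sin(\pi k/3))$, $k = 0,\ldots,6$ with $\sigma_6 = \sigma_0$, and $\mathbb{J}$ the rotation by $\pi/2$. Define $B{:}[v]^2 \in \mathbb{R}^2$ by $(B{:}[v]^2)_p = \sum_{q,r} b_{pqr} v_q v_r$. Then $\sum_{k=0}^5 \mathrm{tr}\big[(\sigma_k | \sigma_{k+1})^{-1} \, (B{:}[\sigma_k]^2 \,|\, B{:}[\sigma_{k+1}]^2)\big]\, \mathbb{J}(\sigma_k - \sigma_{k+1}) = 2\sqrt{3}\, (b_{111} + b_{212},\; b_{222} + b_{112})^T$. -/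
/-!
Cramer's rule gives `tr ((u|v)⁻¹ (x|y)) = (det (x|v) + det (u|y)) / det (u|v)`, and every pair of
consecutive hexagon vertices has `det (σₖ|σₖ₊₁) = sin (π/3) = √3/2`. Since `σₖ₊₃ = -σₖ`, all vertices
are explicit in `1/2` and `√3/2`, and the identity reduces to a polynomial identity in the `b_pqr`.
-/

open Matrix Real

theorem trace_inv_mul_fin_two (a b c d x y z w : ℝ) :
    trace ((!![a, b; c, d])⁻¹ * !![x, y; z, w]) = (x * d - b * z + (a * w - y * c)) / (a * d - b * c) := by
  rw [inv_def, adjugate_fin_two_of, det_fin_two_of, Ring.inverse_eq_inv', smul_mul,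
    trace_smul, trace_fin_two]
  simp only [mul_apply, of_apply, cons_val', cons_val_fin_one, cons_val_zero, cons_val_one,
    Fin.sum_univ_two, smul_eq_mul]
  ring

theorem mulVec_rot90 {R : Type*} [Ring R] (v : Fin 2 → R) :
    !![0, -1; 1, 0] *ᵥ v = ![-v 1, v 0] := by
  ext i; fin_cases i <;> simp [mulVec, vecHead, vecTail]

theorem hexagon_vertices {σ : ℕ → Fin 2 → ℝ}
    (hσ : ∀ k, σ k = ![cos (π * k / 3), sin (π * k / 3)]) :
    σ 0 = ![1, 0] ∧ σ 1 = ![1 / 2, √3 / 2] ∧ σ 2 = ![-1 / 2, √3 / 2] ∧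
      σ 3 = ![-1, 0] ∧ σ 4 = ![-1 / 2, -√3 / 2] ∧ σ 5 = ![1 / 2, -√3 / 2] ∧ σ 6 = ![1, 0] := by
  have h0 : σ 0 = ![1, 0] := by simp [hσ]
  have h1 : σ 1 = ![1 / 2, √3 / 2] := by simp [hσ]
  have h2 : σ 2 = ![-1 / 2, √3 / 2] := by
    rw [hσ, show π * ((2 : ℕ) : ℝ) / 3 = π - π / 3 by push_cast; ring, cos_pi_sub, sin_pi_sub]
    simp [neg_div]
  have shift (k : ℕ) : σ (k + 3) = -σ k := by
    rw [hσ, hσ, show π * ↑(k + 3) / 3 = π * k / 3 + π by push_cast; ring, cos_add_pi, sin_add_pi]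
    simp
  refine ⟨h0, h1, h2, ?_, ?_, ?_, ?_⟩
  · rw [shift 0, h0]; simp
  · rw [shift 1, h1]; simp [neg_div]
  · rw [shift 2, h2]; simp [neg_div]
  · rw [shift 3, shift 0, h0]; simp

/-- Hexagonal trace identity (Lemma on traces):
`∑_{k=0}^5 tr[(σ_k|σ_{k+1})⁻¹ (B:[σ_k]² | B:[σ_{k+1}]²)] J(σ_k - σ_{k+1})
  = 2√3 (b₁₁₁ + b₂₁₂, b₂₂₂ + b₁₁₂)ᵀ`. -/
theorem stmt_9 (B : Fin 2 → Fin 2 → Fin 2 → ℝ)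
    (hsym : ∀ p q r, B p q r = B p r q)
    (σ : ℕ → Fin 2 → ℝ)
    (hσ : ∀ k, σ k = ![Real.cos (π * k / 3), Real.sin (π * k / 3)])
    (Bq : (Fin 2 → ℝ) → Fin 2 → ℝ)
    (hBq : ∀ v p, Bq v p = ∑ q : Fin 2, ∑ r : Fin 2, B p q r * v q * v r) :
    ∑ k ∈ Finset.range 6,
        (Matrix.trace
            ((!![σ k 0, σ (k + 1) 0; σ k 1, σ (k + 1) 1])⁻¹ *
              !![Bq (σ k) 0, Bq (σ (k + 1)) 0; Bq (σ k) 1, Bq (σ (k + 1)) 1]))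
          • ((!![0, -1; 1, 0] : Matrix (Fin 2) (Fin 2) ℝ).mulVec (σ k - σ (k + 1)))
      = (2 * Real.sqrt 3) • ![B 0 0 0 + B 1 0 1, B 1 1 1 + B 0 0 1] := by
  obtain ⟨h0, h1, h2, h3, h4, h5, h6⟩ := hexagon_vertices hσ
  have hBq_expand (v : Fin 2 → ℝ) (p : Fin 2) :
      Bq v p = B p 0 0 * v 0 ^ 2 + 2 * B p 0 1 * v 0 * v 1 + B p 1 1 * v 1 ^ 2 := by
    rw [hBq, Fin.sum_univ_two, Fin.sum_univ_two, Fin.sum_univ_two, hsym p 1 0]; ring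
  ext i
  simp only [Finset.sum_apply, Pi.smul_apply, smul_eq_mul, mulVec_rot90, trace_inv_mul_fin_two,
    hBq_expand, Finset.sum_range_succ, Finset.sum_range_zero, zero_add, Nat.reduceAdd,
    h0, h1, h2, h3, h4, h5, h6]
  fin_cases i <;>
    simp only [Fin.zero_eta, Fin.mk_one, cons_val_zero, cons_val_one, Pi.sub_apply] <;>
    field_simp <;> ring
end

section
/- Let $\sigma_0' = (1,0)$, $\sigma_1' = (1/2,1/2)$, $\sigma_2' = (0,1)$, $\sigma_3' = -\sigma_0'$, $\sigma_4' = -\sigma_1'$, $\sigma_5' = -\sigma_2'$, $\sigma_6' = \sigma_0'$, and let $B$ be the $2\times 2\times 2$ array with $b_{122} = b_{211} = 1$ and all other entries zero. Then $\sum_{k=0}^5 \mathrm{tr}\big[(\sigma_k' | \sigma_{k+1}')^{-1} (B{:}[\sigma_k']^2 \,|\, B{:}[\sigma_{k+1}']^2)\big]\, \mathbb{J}(\sigma_k' - \sigma_{k+1}') = -(1,1)^T$; in particular, this is nonzero while the partial trace $\mathrm{tr}_{12}[B]$ is zero, showing failure of the hexagonal consistency identity for this skew hexagon. -/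
open Matrix

/-- Failure of the hexagonal consistency identity for the skew hexagon
`σ'₀ = (1,0), σ'₁ = (1/2,1/2), σ'₂ = (0,1), σ'_{k+3} = -σ'_k`:
the weighted sum equals `-(1,1)ᵀ ≠ 0` while the partial trace `tr₁₂[B]` vanishes. -/
theorem stmt_10 (σ : ℕ → Fin 2 → ℝ)
    (h0 : σ 0 = ![1, 0]) (h1 : σ 1 = ![1 / 2, 1 / 2]) (h2 : σ 2 = ![0, 1])
    (h3 : σ 3 = -σ 0) (h4 : σ 4 = -σ 1) (h5 : σ 5 = -σ 2) (h6 : σ 6 = σ 0)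
    (B : Fin 2 → Fin 2 → Fin 2 → ℝ)
    (hB : ∀ p q r, B p q r = if (p = 0 ∧ q = 1 ∧ r = 1) ∨ (p = 1 ∧ q = 0 ∧ r = 0) then 1 else 0)
    (Bq : (Fin 2 → ℝ) → Fin 2 → ℝ)
    (hBq : ∀ v p, Bq v p = ∑ q : Fin 2, ∑ r : Fin 2, B p q r * v q * v r) :
    (∑ k ∈ Finset.range 6,
        (Matrix.trace
            ((!![σ k 0, σ (k + 1) 0; σ k 1, σ (k + 1) 1])⁻¹ *
              !![Bq (σ k) 0, Bq (σ (k + 1)) 0; Bq (σ k) 1, Bq (σ (k + 1)) 1]))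
          • ((!![0, -1; 1, 0] : Matrix (Fin 2) (Fin 2) ℝ).mulVec (σ k - σ (k + 1)))
      = -![1, 1])
    ∧ (∀ r : Fin 2, ∑ p : Fin 2, B p p r = 0) := by
  constructor
  · simp only [Finset.sum_range_succ, Finset.sum_range_zero]
    norm_num [h0, h1, h2, h3, h4, h5, h6, hBq, hB, Fin.sum_univ_two,
      Matrix.inv_def, Matrix.adjugate_fin_two, Matrix.det_fin_two,
      Matrix.trace_fin_two, Matrix.mul_apply, Matrix.mulVec, dotProduct,
      Matrix.smul_apply]
    funext i
    fin_cases i <;> norm_num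
  · intro r
    simp only [Fin.sum_univ_two, hB]
    fin_cases r <;> norm_num
end
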